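/- arXiv:1909.06435 — 2 statements merged into one kernel-verified Lean document; each statement's English description precedes it below -/
import Mathlib

section
/- With the recursion h_k = 1 + max({h_i : i < k and t_i + d_i < t_k} ∪ {0}) and h_0 = 1, the value h_k computed by the pruned search that scans indices i = k−1, k−2, … and stops as soon as the current candidate x satisfies x ≥ z_i (where z_i = max{h_j : j ≤ i}) equals the value computed by scanning all indices i < k. -/
open scoped Classical

/-- The pruned backward scan of Algorithm 4: `prunedScan t d h z k i x` processes the
indices `i-1, i-2, …, 0` (in this order), starting from the current candidate `x`; it
stops as soon as the candidate `x` satisfies `x ≥ z j` for the current index `j`, and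
otherwise replaces `x` by `h j` whenever `t j + d j < t k` and `h j > x`. -/
noncomputable def prunedScan (t d : ℕ → ℝ) (h z : ℕ → ℕ) (k : ℕ) : ℕ → ℕ → ℕ
  | 0, x => x
  | i + 1, x =>
    if z i ≤ x then x
    else prunedScan t d h z k i (if t i + d i < t k then max x (h i) else x)

/- Stopping at index `i` is harmless because every value still to be scanned is at most
`z i ≤ x`. -/
theorem prunedScan_eq_max_sup (t d : ℕ → ℝ) (h z : ℕ → ℕ) (k : ℕ)
    (hz : ∀ i, ∀ j ≤ i, h j ≤ z i) (i x : ℕ) :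
    prunedScan t d h z k i x
      = max x (((Finset.range i).filter fun j => t j + d j < t k).sup h) := by
  induction i generalizing x with
  | zero => simp [prunedScan]
  | succ i ih =>
    rw [prunedScan]
    by_cases hzx : z i ≤ x
    · have hsup : ((Finset.range (i + 1)).filter fun j => t j + d j < t k).sup h ≤ z i :=
        Finset.sup_le fun j hj => hz i j (Nat.lt_succ_iff.mp (Finset.mem_range.mp
          (Finset.mem_filter.mp hj).1))
      rw [if_pos hzx, max_eq_left (hsup.trans hzx)]
    · rw [if_neg hzx, ih, Finset.range_add_one, Finset.filter_insert]
      by_cases hc : t i + d i < t k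
      · rw [if_pos hc, if_pos hc, Finset.sup_insert, max_assoc]
      · rw [if_neg hc, if_neg hc]

theorem statement10_general
    (t : ℕ → ℝ)
    (d : ℕ → ℝ)
    (h : ℕ → ℕ)
    (z : ℕ → ℕ) (hz : ∀ i : ℕ, z i = (Finset.range (i + 1)).sup h)
    (k : ℕ) :
    prunedScan t d h z k k 0
      = ((Finset.range k).filter fun i => t i + d i < t k).sup h := by
  have h_le_z : ∀ i, ∀ j ≤ i, h j ≤ z i := fun i j hji =>
    hz i ▸ Finset.le_sup (Finset.mem_range.mpr (Nat.lt_succ_of_le hji))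
  rw [prunedScan_eq_max_sup t d h z k h_le_z, zero_max]

/-- With the recursion `h 0 = 1`,
`h k = 1 + max({h i : i < k and t i + d i < t k} ∪ {0})`, and the running maximum
`z i = max {h j : j ≤ i}`, the value computed by the pruned backward scan (which stops
as soon as the current candidate `x` satisfies `x ≥ z i`) starting from candidate `0`
equals the value computed by scanning all indices `i < k`. -/
theorem statement10
    (t : ℕ → ℝ) (ht : StrictMono t)
    (d : ℕ → ℝ) (hd0 : ∀ i : ℕ, 0 ≤ d i)
    (h : ℕ → ℕ) (h0 : h 0 = 1)
    (hrec : ∀ k : ℕ, 1 ≤ k →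
      h k = 1 + ((Finset.range k).filter fun i => t i + d i < t k).sup h)
    (z : ℕ → ℕ) (hz : ∀ i : ℕ, z i = (Finset.range (i + 1)).sup h)
    (k : ℕ) (hk : 1 ≤ k) :
    prunedScan t d h z k k 0
      = ((Finset.range k).filter fun i => t i + d i < t k).sup h :=
  statement10_general t d h z hz k
end

section
/- In the recursion h_k = 1 + max({h_i : i < k and t_i + d_i < t_k} ∪ {0}), if all delays satisfy d_i ≥ D for some D > 0 and the production times satisfy t_k − t_i < D for all i with k − i ≤ c (i.e., any c consecutive blocks are produced within time D), then h_k ≤ h_{k−c} + 1 whenever k ≥ c; consequently the maximum chain length z_n after n blocks is at most ⌈n/c⌉ + 1. -/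
/-!
A block can only build on blocks whose delay has expired, and a block `i` at most `c` positions
back was produced less than `D ≤ d i` before it, so its delay has not expired yet. Every parent
of block `k` lies at or before `k - c`, and since the height is monotone in the block index,
`h k ≤ h (k - c) + 1`. Iterating this along the multiples of `c` bounds the height by one more
than the number of steps of length `c` needed to reach `n`.
-/

open Finset

theorem Monotone.le_add_ceilDiv {f : ℕ → ℕ} (hf : Monotone f) {c : ℕ} (hc : 0 < c)
    (hstep : ∀ k, f (k + c) ≤ f k + 1) (n : ℕ) : f n ≤ f 0 + n ⌈/⌉ c := by
  have hmul : ∀ m, f (m * c) ≤ f 0 + m := by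
    intro m
    induction m with
    | zero => simp
    | succ m ih => rw [Nat.succ_mul]; linarith [hstep (m * c)]
  calc f n ≤ f (n ⌈/⌉ c * c) := hf (by simpa [mul_comm] using le_smul_ceilDiv (b := n) hc)
    _ ≤ f 0 + n ⌈/⌉ c := hmul _

section ChainHeight

variable {t d : ℕ → ℝ} {h : ℕ → ℕ}

theorem monotone_of_chainHeight
    (hrec : ∀ k, 1 ≤ k → h k = 1 + ((range k).filter fun i => t i + d i < t k).sup h)
    (ht : Monotone t) (h0 : h 0 = 1) : Monotone h := by
  refine monotone_nat_of_le_succ fun k => ?_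
  rcases Nat.eq_zero_or_pos k with rfl | hk
  · rw [h0, hrec 1 le_rfl]
    exact Nat.le_add_right 1 _
  · rw [hrec k hk, hrec (k + 1) (by omega)]
    refine Nat.add_le_add_left (sup_mono fun i hi => ?_) 1
    simp only [mem_filter, mem_range] at hi ⊢
    exact ⟨by omega, hi.2.trans_le (ht k.le_succ)⟩

theorem chainHeight_le_add_one {j k : ℕ}
    (hk : h k = 1 + ((range k).filter fun i => t i + d i < t k).sup h) (hmono : Monotone h)
    (hparent : ∀ i < k, t i + d i < t k → i ≤ j) : h k ≤ h j + 1 := by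
  rw [hk, add_comm, Nat.add_le_add_iff_right]
  refine Finset.sup_le fun i hi => hmono ?_
  simp only [mem_filter, mem_range] at hi
  exact hparent i hi.1 hi.2

end ChainHeight

theorem statement18_general
    (t : ℕ → ℝ) (ht : StrictMono t)
    (d : ℕ → ℝ)
    (h : ℕ → ℕ) (h0 : h 0 = 1)
    (hrec : ∀ k : ℕ, 1 ≤ k →
      h k = 1 + ((Finset.range k).filter fun i => t i + d i < t k).sup h)
    (z : ℕ → ℕ) (hz : ∀ n : ℕ, z n = (Finset.range (n + 1)).sup h)
    (D : ℝ) (hdD : ∀ i : ℕ, D ≤ d i)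
    (c : ℕ) (hc : 1 ≤ c)
    (hfast : ∀ i k : ℕ, i ≤ k → k - i ≤ c → t k - t i < D) :
    (∀ k : ℕ, c ≤ k → h k ≤ h (k - c) + 1) ∧
      ∀ n : ℕ, z n ≤ (n + c - 1) / c + 1 := by
  have hmono : Monotone h := monotone_of_chainHeight hrec ht.monotone h0
  have hstep : ∀ k, c ≤ k → h k ≤ h (k - c) + 1 := by
    refine fun k hk => chainHeight_le_add_one (hrec k (hc.trans hk)) hmono fun i hik hti => ?_
    by_contra! hlt
    linarith [hfast i k hik.le (by omega), hdD i]
  refine ⟨hstep, fun n => ?_⟩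
  have hbound : h n ≤ n ⌈/⌉ c + 1 := by
    rw [add_comm, ← h0]
    exact hmono.le_add_ceilDiv hc (fun k => by simpa using hstep (k + c) le_add_self) n
  rw [hz n, ← Nat.ceilDiv_eq_add_pred_div]
  exact Finset.sup_le fun i hi => (hmono (Nat.lt_succ_iff.1 (mem_range.1 hi))).trans hbound

/-- In the recursion `h 0 = 1`,
`h k = 1 + max({h i : i < k and t i + d i < t k} ∪ {0})`, if all delays satisfy
`d i ≥ D` for some `D > 0` and any `c` consecutive blocks are produced within time `D`
(`t k - t i < D` whenever `i ≤ k` and `k - i ≤ c`), then `h k ≤ h (k - c) + 1`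
whenever `k ≥ c`; consequently the maximum chain length `z n = max {h i : i ≤ n}`
after `n` blocks is at most `⌈n / c⌉ + 1`. -/
theorem statement18
    (t : ℕ → ℝ) (ht : StrictMono t)
    (d : ℕ → ℝ) (hd0 : ∀ i : ℕ, 0 ≤ d i)
    (h : ℕ → ℕ) (h0 : h 0 = 1)
    (hrec : ∀ k : ℕ, 1 ≤ k →
      h k = 1 + ((Finset.range k).filter fun i => t i + d i < t k).sup h)
    (z : ℕ → ℕ) (hz : ∀ n : ℕ, z n = (Finset.range (n + 1)).sup h)
    (D : ℝ) (hD : 0 < D) (hdD : ∀ i : ℕ, D ≤ d i)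
    (c : ℕ) (hc : 1 ≤ c)
    (hfast : ∀ i k : ℕ, i ≤ k → k - i ≤ c → t k - t i < D) :
    (∀ k : ℕ, c ≤ k → h k ≤ h (k - c) + 1) ∧
      ∀ n : ℕ, z n ≤ (n + c - 1) / c + 1 :=
  statement18_general t ht d h h0 hrec z hz D hdD c hc hfast
end
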